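/- Let N ≥ 1 and let P be a Markov transition kernel on ℤ₊^N. Assume: (i) P is skip-free with some constant b₀ > 0, i.e. P(x, {y : |‖y‖ − ‖x‖| ≤ b₀}) = 1 for every x; (ii) P is 0-irreducible, i.e. for every x there exists t ∈ ℕ with P^t(x, {0}) > 0; (iii) the chain is geometrically ergodic: there exist an invariant probability measure π for P and a constant θ > 0 such that for every pair of states x, y, e^{θ t}·|P^t(x, {y}) − π({y})| → 0 as t → ∞. Then π has an exponential tail: there exists θ′ > 0 such that ∑_{x ∈ ℤ₊^N} π({x})·e^{θ′ ‖x‖} < ∞. -/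

import Mathlib

open Filter Real

def l1 {N : ℕ} (x : Fin N → ℕ) : ℝ := ∑ i, (x i : ℝ)

noncomputable def iterK {N : ℕ} (P : (Fin N → ℕ) → (Fin N → ℕ) → ℝ) :
    ℕ → (Fin N → ℕ) → (Fin N → ℕ) → ℝ
  | 0 => fun x y => if x = y then 1 else 0
  | t + 1 => fun x y => ∑' z, P x z * iterK P t z y

/-!
Let `τ` be the time of the first visit to `0` after time `0` and `T n = P_π(τ > n)`.
Decomposing `π(0) = ∑ₓ π(x) Pᵗ⁺¹(x, 0)` according to the first visit to `0` gives the renewal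
identity `π(0) = ∑_{s + j = t} P_π(τ = s + 1) Pʲ(0, 0)`. Since `Pʲ(0, 0) → π(0)` geometrically fast
and `π(0) > 0` by irreducibility, comparing truncated generating functions at some `q > 1` close
to `1` shows `T n = O(q⁻ⁿ)`. A skip-free chain started beyond L¹-radius `n b₀` cannot reach `0`
within `n` steps, so `π(‖x‖ > n b₀) ≤ T n`: the tail of `π` is exponentially small.
-/
open Finset Topology

section Summation

variable {ι : Type*} {p W : ι → ℝ}

lemma summable_mul_of_nonneg_of_le_one (hp : ∀ i, 0 ≤ p i) (hps : Summable p)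
    (hW0 : ∀ i, 0 ≤ W i) (hW1 : ∀ i, W i ≤ 1) : Summable fun i => p i * W i :=
  hps.of_nonneg_of_le (fun i => mul_nonneg (hp i) (hW0 i))
    fun i => mul_le_of_le_one_right (hp i) (hW1 i)

lemma tsum_mul_le_tsum_of_le_one (hp : ∀ i, 0 ≤ p i) (hps : Summable p) (hW1 : ∀ i, W i ≤ 1) :
    ∑' i, p i * W i ≤ ∑' i, p i := by
  by_cases hpW : Summable fun i => p i * W i
  · exact hpW.tsum_le_tsum (fun i => mul_le_of_le_one_right (hp i) (hW1 i)) hps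
  · rw [tsum_eq_zero_of_not_summable hpW]
    exact tsum_nonneg hp

end Summation

section Renewal

lemma sub_one_mul_sum_range_pow_mul (T : ℕ → ℝ) (q : ℝ) (n : ℕ) :
    (q - 1) * ∑ t ∈ range n, q ^ (t + 1) * T (t + 1) =
      ∑ s ∈ range n, (T s - T (s + 1)) * q ^ (s + 1) - q * T 0 + q ^ (n + 1) * T n := by
  induction n with
  | zero => simp
  | succ n ih => rw [sum_range_succ, sum_range_succ, mul_add, ih]; ring

lemma one_sub_mul_sum_range_sum_antidiagonal_le {a : ℕ → ℝ} {r : ℝ} (ha : ∀ n, 0 ≤ a n)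
    (hr : 0 ≤ r) (n : ℕ) :
    (1 - r) * ∑ t ∈ range n, ∑ p ∈ antidiagonal t, a p.1 * r ^ p.2 ≤ ∑ s ∈ range n, a s := by
  set c : ℕ → ℝ := fun t => ∑ p ∈ antidiagonal t, a p.1 * r ^ p.2
  have hc0 : ∀ t, 0 ≤ c t := fun t => sum_nonneg fun p _ => mul_nonneg (ha _) (pow_nonneg hr _)
  have hc : ∀ t, c (t + 1) = a (t + 1) + r * c t := fun t => by
    simp only [c, Nat.sum_antidiagonal_succ', pow_succ, mul_sum, pow_zero, mul_one]
    congr 1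
    exact sum_congr rfl fun p _ => by ring
  cases n with
  | zero => simp
  | succ n =>
    have hS : ∑ t ∈ range (n + 1), c t = ∑ s ∈ range (n + 1), a s + r * ∑ t ∈ range n, c t := by
      rw [sum_range_succ', sum_range_succ' a, mul_sum]
      simp only [hc, sum_add_distrib]
      simp only [c, Nat.antidiagonal_zero, sum_singleton, pow_zero, mul_one]
      ring
    have hmono : ∑ t ∈ range n, c t ≤ ∑ t ∈ range (n + 1), c t :=
      sum_le_sum_of_subset_of_nonneg (range_mono n.le_succ) fun t _ _ => hc0 t
    nlinarith [mul_le_mul_of_nonneg_left hmono hr]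

variable {T u : ℕ → ℝ} {π₀ C ρ : ℝ}

lemma mul_succ_le_of_renewal {t : ℕ} (hT0 : T 0 = 1) (hT : Antitone T)
    (hren : π₀ = ∑ p ∈ antidiagonal t, (T p.1 - T (p.1 + 1)) * u p.2)
    (hu : ∀ j, |u j - π₀| ≤ C * ρ ^ j) :
    π₀ * T (t + 1) ≤ C * ∑ p ∈ antidiagonal t, (T p.1 - T (p.1 + 1)) * ρ ^ p.2 := by
  have hmass : ∑ p ∈ antidiagonal t, (T p.1 - T (p.1 + 1)) = 1 - T (t + 1) := by
    rw [Nat.sum_antidiagonal_eq_sum_range_succ (fun i _ => T i - T (i + 1)), sum_range_sub', hT0]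
  calc π₀ * T (t + 1) = ∑ p ∈ antidiagonal t, (T p.1 - T (p.1 + 1)) * (u p.2 - π₀) := by
        simp only [mul_sub, sum_sub_distrib, ← sum_mul, hmass, ← hren]; ring
    _ ≤ ∑ p ∈ antidiagonal t, (T p.1 - T (p.1 + 1)) * (C * ρ ^ p.2) :=
        sum_le_sum fun p _ => mul_le_mul_of_nonneg_left ((le_abs_self _).trans (hu _))
          (sub_nonneg.mpr (hT p.1.le_succ))
    _ = C * ∑ p ∈ antidiagonal t, (T p.1 - T (p.1 + 1)) * ρ ^ p.2 := by
        rw [mul_sum]; exact sum_congr rfl fun p _ => by ring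

lemma exists_one_lt_mul_lt_one_and_div_lt (hπ₀ : 0 < π₀) (hρ1 : ρ < 1) :
    ∃ q > 1, ρ * q < 1 ∧ (q - 1) * C / (1 - ρ * q) < π₀ / 2 := by
  have hρq : ∀ᶠ q in 𝓝 (1 : ℝ), ρ * q < 1 :=
    (show ContinuousAt (fun q : ℝ => ρ * q) 1 by fun_prop).eventually_lt continuousAt_const
      (by simpa using hρ1)
  have hcont : ContinuousAt (fun q : ℝ => (q - 1) * C / (1 - ρ * q)) 1 :=
    ContinuousAt.div (by fun_prop) (by fun_prop) (by linarith)
  have hsmall : ∀ᶠ q in 𝓝 (1 : ℝ), (q - 1) * C / (1 - ρ * q) < π₀ / 2 :=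
    hcont.eventually_lt continuousAt_const (by simpa using hπ₀)
  exact ((eventually_mem_nhdsWithin (s := Set.Ioi 1)).and
    (nhdsWithin_le_nhds (hρq.and hsmall))).exists

lemma mul_sum_range_pow_mul_le_of_renewal {q : ℝ} (hq : 0 ≤ q) (hρ0 : 0 ≤ ρ) (hρq : ρ * q ≤ 1)
    (hT0 : T 0 = 1) (hT : Antitone T)
    (hren : ∀ t, π₀ = ∑ p ∈ antidiagonal t, (T p.1 - T (p.1 + 1)) * u p.2)
    (hu : ∀ j, |u j - π₀| ≤ C * ρ ^ j) (hC : 0 ≤ C) (n : ℕ) :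
    (1 - ρ * q) * (π₀ * ∑ t ∈ range n, q ^ (t + 1) * T (t + 1)) ≤
      C * ∑ s ∈ range n, (T s - T (s + 1)) * q ^ (s + 1) := by
  calc (1 - ρ * q) * (π₀ * ∑ t ∈ range n, q ^ (t + 1) * T (t + 1))
      = (1 - ρ * q) * ∑ t ∈ range n, q ^ (t + 1) * (π₀ * T (t + 1)) := by
        rw [mul_sum]; congr 1; exact sum_congr rfl fun t _ => by ring
    _ ≤ (1 - ρ * q) * ∑ t ∈ range n,
          q ^ (t + 1) * (C * ∑ p ∈ antidiagonal t, (T p.1 - T (p.1 + 1)) * ρ ^ p.2) :=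
        mul_le_mul_of_nonneg_left (sum_le_sum fun t _ => mul_le_mul_of_nonneg_left
          (mul_succ_le_of_renewal hT0 hT (hren t) hu) (pow_nonneg hq _)) (sub_nonneg.mpr hρq)
    _ = C * ((1 - ρ * q) * ∑ t ∈ range n, ∑ p ∈ antidiagonal t,
          (T p.1 - T (p.1 + 1)) * q ^ (p.1 + 1) * (ρ * q) ^ p.2) := by
        simp only [mul_sum]
        refine sum_congr rfl fun t _ => sum_congr rfl fun p hp => ?_
        rw [← HasAntidiagonal.mem_antidiagonal.mp hp]
        ring
    _ ≤ C * ∑ s ∈ range n, (T s - T (s + 1)) * q ^ (s + 1) :=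
        mul_le_mul_of_nonneg_left (one_sub_mul_sum_range_sum_antidiagonal_le
          (fun s => mul_nonneg (sub_nonneg.mpr (hT s.le_succ)) (pow_nonneg hq _))
          (mul_nonneg hρ0 hq) n) hC

theorem exists_mul_pow_le_of_renewal (hπ₀ : 0 < π₀) (hT0 : T 0 = 1) (hT : Antitone T)
    (hT_nonneg : ∀ n, 0 ≤ T n)
    (hren : ∀ t, π₀ = ∑ p ∈ antidiagonal t, (T p.1 - T (p.1 + 1)) * u p.2)
    (hρ0 : 0 ≤ ρ) (hρ1 : ρ < 1) (hu : ∀ j, |u j - π₀| ≤ C * ρ ^ j) :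
    ∃ q > 1, ∃ K, ∀ n, T n * q ^ n ≤ K := by
  have hC : 0 ≤ C := by simpa using (abs_nonneg _).trans (hu 0)
  obtain ⟨q, hq, hρq, hsmall⟩ := exists_one_lt_mul_lt_one_and_div_lt (C := C) hπ₀ hρ1
  have hD : 0 < 1 - ρ * q := by linarith
  set L : ℕ → ℝ := fun n => ∑ t ∈ range n, q ^ (t + 1) * T (t + 1)
  set G : ℕ → ℝ := fun n => ∑ s ∈ range n, (T s - T (s + 1)) * q ^ (s + 1)
  have hL0 : ∀ n, 0 ≤ L n := fun n =>
    sum_nonneg fun t _ => mul_nonneg (by positivity) (hT_nonneg _)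
  have hG0 : ∀ n, 0 ≤ G n := fun n =>
    sum_nonneg fun s _ => mul_nonneg (sub_nonneg.mpr (hT s.le_succ)) (by positivity)
  have habel : ∀ n, (q - 1) * L n = G n - q + q ^ (n + 1) * T n := fun n => by
    simpa [hT0] using sub_one_mul_sum_range_pow_mul T q n
  have hLG : ∀ n, (1 - ρ * q) * (π₀ * L n) ≤ C * G n :=
    mul_sum_range_pow_mul_le_of_renewal (by positivity) hρ0 hρq.le hT0 hT hren hu hC
  have hsmall' : (q - 1) * C ≤ (1 - ρ * q) * π₀ / 2 := by
    rw [div_lt_iff₀ hD] at hsmall; linarith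
  -- `q - 1` is so small that `hLG` and `habel` bound `L n` uniformly in `n`.
  set B := 2 * C * q / ((1 - ρ * q) * π₀)
  have hL : ∀ n, L n ≤ B := fun n => by
    have hG : G n ≤ (q - 1) * L n + q := by
      linarith [habel n, mul_nonneg (pow_nonneg (by positivity : (0 : ℝ) ≤ q) (n + 1))
        (hT_nonneg n)]
    rw [le_div_iff₀ (by positivity)]
    nlinarith [hLG n, mul_le_mul_of_nonneg_left hG hC, mul_le_mul_of_nonneg_right hsmall' (hL0 n)]
  refine ⟨q, hq, (q - 1) * B + q, fun n => ?_⟩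
  calc T n * q ^ n ≤ q ^ (n + 1) * T n := by
        rw [pow_succ, mul_comm]
        exact mul_le_mul_of_nonneg_right (le_mul_of_one_le_right (by positivity) hq.le)
          (hT_nonneg n)
    _ = (q - 1) * L n - G n + q := by linarith [habel n]
    _ ≤ (q - 1) * B + q := by
        nlinarith [hG0 n, mul_le_mul_of_nonneg_left (hL n) (by linarith : (0 : ℝ) ≤ q - 1)]

end Renewal

lemma exists_abs_le_mul_exp_neg_pow {e : ℕ → ℝ} {θ : ℝ}
    (h : Tendsto (fun t : ℕ => exp (θ * t) * |e t|) atTop (𝓝 0)) :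
    ∃ C, ∀ t, |e t| ≤ C * exp (-θ) ^ t := by
  obtain ⟨C, hC⟩ := h.bddAbove_range
  refine ⟨C, fun t => ?_⟩
  rw [← exp_nat_mul, mul_comm]
  calc |e t| = exp (t * -θ) * (exp (θ * t) * |e t|) := by
        rw [← mul_assoc, ← exp_add, show (t : ℝ) * -θ + θ * t = 0 by ring, exp_zero, one_mul]
    _ ≤ exp (t * -θ) * C := mul_le_mul_of_nonneg_left (hC ⟨t, rfl⟩) (exp_pos _).le

theorem exists_summable_mul_exp_of_tail_le {α : Type*} {w ℓ : α → ℝ} {b q K : ℝ}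
    (hw0 : ∀ x, 0 ≤ w x) (hw : Summable w) (hb : 0 < b) (hq : 1 < q)
    (htail : ∀ n : ℕ, (∑' x, {x | n * b < ℓ x}.indicator w x) * q ^ n ≤ K) :
    ∃ θ > 0, Summable fun x => w x * exp (θ * ℓ x) := by
  set θ := log q / (2 * b)
  have hθ : 0 < θ := div_pos (log_pos hq) (by positivity)
  set p := exp (θ * b)
  have hpq : p < q := by
    rw [← exp_log (by linarith : 0 < q)]
    refine exp_lt_exp.mpr ?_
    rw [show θ * b = log q / 2 by simp only [θ]; field_simp]
    linarith [log_pos hq]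
  set s : ℕ → Set α := fun j => {x | ⌈ℓ x / b⌉₊ = j}
  have hf0 : 0 ≤ fun x => w x * exp (θ * ℓ x) := fun x => mul_nonneg (hw0 x) (exp_pos _).le
  have hexp : ∀ j, ∀ x ∈ s j, w x * exp (θ * ℓ x) ≤ w x * p ^ j := fun j x hx => by
    refine mul_le_mul_of_nonneg_left ?_ (hw0 x)
    have hℓ : ℓ x ≤ j * b := by
      rw [← div_le_iff₀ hb, ← hx.out]
      exact Nat.le_ceil _
    rw [← exp_nat_mul, exp_le_exp]
    nlinarith
  have hfiber : ∀ n, s (n + 1) ⊆ {x | n * b < ℓ x} := fun n x hx => by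
    have := ((Nat.ceil_eq_iff n.succ_ne_zero).mp hx.out).1
    simpa [lt_div_iff₀ hb] using this
  refine ⟨θ, hθ, ?_⟩
  rw [summable_partition hf0 (s := s) fun x => ⟨_, rfl, fun j hj => hj.symm⟩]
  have hsummable : ∀ j, Summable fun x : s j => w x * exp (θ * ℓ x) := fun j =>
    ((hw.subtype _).mul_right (p ^ j)).of_nonneg_of_le (fun x => hf0 x) fun x => hexp j x x.2
  refine ⟨hsummable, ?_⟩
  rw [← summable_nat_add_iff 1]
  have hratio : p / q < 1 := (div_lt_one (by linarith)).mpr hpq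
  refine ((summable_geometric_of_lt_one (by positivity) hratio).mul_left (K * p)).of_nonneg_of_le
    (fun n => tsum_nonneg fun x => hf0 x) fun n => ?_
  calc ∑' x : s (n + 1), w x * exp (θ * ℓ x) ≤ ∑' x : s (n + 1), w x * p ^ (n + 1) :=
        (hsummable _).tsum_le_tsum (fun x => hexp _ x x.2) ((hw.subtype _).mul_right _)
    _ = (∑' x : s (n + 1), w x) * p ^ (n + 1) := tsum_mul_right
    _ ≤ (∑' x, {x | n * b < ℓ x}.indicator w x) * p ^ (n + 1) := by
        refine mul_le_mul_of_nonneg_right ?_ (by positivity)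
        rw [_root_.tsum_subtype]
        exact (hw.indicator _).tsum_le_tsum
          (Set.indicator_le_indicator_of_subset (hfiber n) fun x => hw0 x) (hw.indicator _)
    _ ≤ K / q ^ n * p ^ (n + 1) :=
        mul_le_mul_of_nonneg_right ((le_div_iff₀ (by positivity)).mpr (htail n)) (by positivity)
    _ = K * p * (p / q) ^ n := by rw [div_pow, pow_succ]; field_simp

section Kernel

variable {S : Type*} {P : S → S → ℝ} {μ W : S → ℝ}

lemma summable_kernel_mul_ite [DecidableEq S] (hP0 : ∀ x y, 0 ≤ P x y)
    (hP1 : ∀ x, HasSum (P x) 1) (hW0 : ∀ z, 0 ≤ W z) (hW1 : ∀ z, W z ≤ 1) (a x : S) :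
    Summable fun z => P x z * if z = a then 0 else W z :=
  summable_mul_of_nonneg_of_le_one (hP0 x) (hP1 x).summable
    (fun z => by split_ifs; exacts [le_rfl, hW0 z])
    fun z => by split_ifs; exacts [zero_le_one, hW1 z]

lemma tsum_mul_tsum_kernel_of_invariant (hP0 : ∀ x y, 0 ≤ P x y) (hP1 : ∀ x, HasSum (P x) 1)
    (hμ0 : ∀ x, 0 ≤ μ x) (hμ : Summable μ) (hinv : ∀ y, HasSum (fun x => μ x * P x y) (μ y))
    (hW0 : ∀ z, 0 ≤ W z) (hW1 : ∀ z, W z ≤ 1) :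
    ∑' x, μ x * ∑' z, P x z * W z = ∑' z, μ z * W z := by
  have hrow : ∀ x, Summable fun z => P x z * W z := fun x =>
    summable_mul_of_nonneg_of_le_one (hP0 x) (hP1 x).summable hW0 hW1
  have hprod : Summable fun p : S × S => μ p.1 * (P p.1 p.2 * W p.2) := by
    refine (summable_prod_of_nonneg fun p => ?_).mpr ⟨fun x => (hrow x).mul_left (μ x), ?_⟩
    · exact mul_nonneg (hμ0 _) (mul_nonneg (hP0 _ _) (hW0 _))
    · simp only [tsum_mul_left]
      exact summable_mul_of_nonneg_of_le_one hμ0 hμ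
        (fun x => tsum_nonneg fun z => mul_nonneg (hP0 x z) (hW0 z))
        fun x => (tsum_mul_le_tsum_of_le_one (hP0 x) (hP1 x).summable hW1).trans (hP1 x).tsum_eq.le
  calc ∑' x, μ x * ∑' z, P x z * W z = ∑' x, ∑' z, μ x * (P x z * W z) := by
        simp_rw [tsum_mul_left]
    _ = ∑' z, ∑' x, μ x * (P x z * W z) :=
        (Summable.tsum_comm (f := fun x z => μ x * (P x z * W z)) hprod).symm
    _ = ∑' z, μ z * W z := tsum_congr fun z => by
        simp_rw [← mul_assoc, tsum_mul_right, (hinv z).tsum_eq]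

end Kernel

section Chain

variable {N : ℕ} {P : (Fin N → ℕ) → (Fin N → ℕ) → ℝ} {μ : (Fin N → ℕ) → ℝ} {a : Fin N → ℕ}

lemma iterK_nonneg (hP0 : ∀ x y, 0 ≤ P x y) (t : ℕ) (x y : Fin N → ℕ) : 0 ≤ iterK P t x y := by
  induction t generalizing x with
  | zero => simp only [iterK]; split_ifs <;> norm_num
  | succ t ih => exact tsum_nonneg fun z => mul_nonneg (hP0 x z) (ih z)

lemma iterK_le_one (hP0 : ∀ x y, 0 ≤ P x y) (hP1 : ∀ x, HasSum (P x) 1) (t : ℕ)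
    (x y : Fin N → ℕ) : iterK P t x y ≤ 1 := by
  induction t generalizing x with
  | zero => simp only [iterK]; split_ifs <;> norm_num
  | succ t ih =>
    exact (tsum_mul_le_tsum_of_le_one (hP0 x) (hP1 x).summable ih).trans (hP1 x).tsum_eq.le

lemma tsum_mul_iterK_of_invariant (hP0 : ∀ x y, 0 ≤ P x y) (hP1 : ∀ x, HasSum (P x) 1)
    (hμ0 : ∀ x, 0 ≤ μ x) (hμ : Summable μ) (hinv : ∀ y, HasSum (fun x => μ x * P x y) (μ y))
    (t : ℕ) (y : Fin N → ℕ) : ∑' x, μ x * iterK P t x y = μ y := by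
  induction t with
  | zero => simp [iterK]
  | succ t ih =>
    exact (tsum_mul_tsum_kernel_of_invariant hP0 hP1 hμ0 hμ hinv (iterK_nonneg hP0 t · y)
      (iterK_le_one hP0 hP1 t · y)).trans ih

lemma invariant_pos_of_reachable (hP0 : ∀ x y, 0 ≤ P x y) (hP1 : ∀ x, HasSum (P x) 1)
    (hμ0 : ∀ x, 0 ≤ μ x) (hμ1 : HasSum μ 1) (hstat : ∀ t y, ∑' x, μ x * iterK P t x y = μ y)
    (hreach : ∀ x, ∃ t, 0 < iterK P t x a) : 0 < μ a := by
  obtain ⟨x, hx⟩ : ∃ x, 0 < μ x := by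
    by_contra! h
    obtain rfl : μ = 0 := funext fun x => le_antisymm (h x) (hμ0 x)
    simpa using hμ1.unique hasSum_zero
  obtain ⟨t, ht⟩ := hreach x
  calc 0 < μ x * iterK P t x a := mul_pos hx ht
    _ ≤ ∑' y, μ y * iterK P t y a :=
        (summable_mul_of_nonneg_of_le_one hμ0 hμ1.summable (iterK_nonneg hP0 t · a)
          (iterK_le_one hP0 hP1 t · a)).le_tsum x
          fun y _ => mul_nonneg (hμ0 y) (iterK_nonneg hP0 t y a)
    _ = μ a := hstat t a

/-- The probability that the chain started at `x` avoids `a` at times `1, …, n`. -/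
noncomputable def avoidProb (P : (Fin N → ℕ) → (Fin N → ℕ) → ℝ) (a : Fin N → ℕ) :
    ℕ → (Fin N → ℕ) → ℝ
  | 0 => fun _ => 1
  | n + 1 => fun x => ∑' z, P x z * if z = a then 0 else avoidProb P a n z

/-- The probability that the chain started at `x` visits `a` for the first time after time `0`
at time `s + 1`. -/
noncomputable def firstPassage (P : (Fin N → ℕ) → (Fin N → ℕ) → ℝ) (a : Fin N → ℕ) (s : ℕ)
    (x : Fin N → ℕ) : ℝ :=
  avoidProb P a s x - avoidProb P a (s + 1) x

lemma avoidProb_nonneg (hP0 : ∀ x y, 0 ≤ P x y) (n : ℕ) (x : Fin N → ℕ) :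
    0 ≤ avoidProb P a n x := by
  induction n generalizing x with
  | zero => exact zero_le_one
  | succ n ih =>
    exact tsum_nonneg fun z => mul_nonneg (hP0 x z) (by split_ifs; exacts [le_rfl, ih z])

lemma avoidProb_le_one (hP0 : ∀ x y, 0 ≤ P x y) (hP1 : ∀ x, HasSum (P x) 1) (n : ℕ)
    (x : Fin N → ℕ) : avoidProb P a n x ≤ 1 := by
  induction n generalizing x with
  | zero => exact le_rfl
  | succ n ih =>
    exact (tsum_mul_le_tsum_of_le_one (hP0 x) (hP1 x).summable
      fun z => by split_ifs; exacts [zero_le_one, ih z]).trans (hP1 x).tsum_eq.le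

lemma avoidProb_succ_le (hP0 : ∀ x y, 0 ≤ P x y) (hP1 : ∀ x, HasSum (P x) 1) (n : ℕ)
    (x : Fin N → ℕ) : avoidProb P a (n + 1) x ≤ avoidProb P a n x := by
  induction n generalizing x with
  | zero => exact avoidProb_le_one hP0 hP1 1 x
  | succ n ih =>
    exact (summable_kernel_mul_ite hP0 hP1 (avoidProb_nonneg hP0 _) (avoidProb_le_one hP0 hP1 _)
      a x).tsum_le_tsum
      (fun z => mul_le_mul_of_nonneg_left (by split_ifs; exacts [le_rfl, ih z]) (hP0 x z))
      (summable_kernel_mul_ite hP0 hP1 (avoidProb_nonneg hP0 _) (avoidProb_le_one hP0 hP1 _) a x)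

lemma firstPassage_nonneg (hP0 : ∀ x y, 0 ≤ P x y) (hP1 : ∀ x, HasSum (P x) 1) (s : ℕ)
    (x : Fin N → ℕ) : 0 ≤ firstPassage P a s x :=
  sub_nonneg.mpr (avoidProb_succ_le hP0 hP1 s x)

lemma firstPassage_le_one (hP0 : ∀ x y, 0 ≤ P x y) (hP1 : ∀ x, HasSum (P x) 1) (s : ℕ)
    (x : Fin N → ℕ) : firstPassage P a s x ≤ 1 := by
  unfold firstPassage
  linarith [avoidProb_le_one (a := a) hP0 hP1 s x, avoidProb_nonneg (a := a) hP0 (s + 1) x]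

lemma firstPassage_zero (hP1 : ∀ x, HasSum (P x) 1) (x : Fin N → ℕ) :
    firstPassage P a 0 x = P x a := by
  have hsplit := (hP1 x).summable.tsum_eq_add_tsum_ite a
  rw [(hP1 x).tsum_eq] at hsplit
  simp only [firstPassage, avoidProb, mul_ite, mul_zero, mul_one]
  linarith

lemma firstPassage_succ (hP0 : ∀ x y, 0 ≤ P x y) (hP1 : ∀ x, HasSum (P x) 1) (s : ℕ)
    (x : Fin N → ℕ) :
    firstPassage P a (s + 1) x = ∑' z, P x z * if z = a then 0 else firstPassage P a s z := by
  rw [firstPassage, avoidProb, avoidProb]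
  dsimp only
  rw [← Summable.tsum_sub
    (summable_kernel_mul_ite hP0 hP1 (avoidProb_nonneg hP0 _) (avoidProb_le_one hP0 hP1 _) a x)
    (summable_kernel_mul_ite hP0 hP1 (avoidProb_nonneg hP0 _) (avoidProb_le_one hP0 hP1 _) a x)]
  exact tsum_congr fun z => by split_ifs <;> simp [firstPassage, mul_sub]

lemma iterK_succ_eq_sum_firstPassage (hP0 : ∀ x y, 0 ≤ P x y) (hP1 : ∀ x, HasSum (P x) 1)
    (t : ℕ) (x : Fin N → ℕ) :
    iterK P (t + 1) x a = ∑ p ∈ antidiagonal t, firstPassage P a p.1 x * iterK P p.2 a a := by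
  induction t generalizing x with
  | zero =>
    rw [Nat.antidiagonal_zero, sum_singleton, firstPassage_zero hP1]
    simp [iterK]
  | succ t ih =>
    have hsplit := (summable_mul_of_nonneg_of_le_one (hP0 x) (hP1 x).summable
      (iterK_nonneg hP0 (t + 1) · a) (iterK_le_one hP0 hP1 (t + 1) · a)).tsum_eq_add_tsum_ite a
    have hterm : ∀ z, (if z = a then 0 else P x z * iterK P (t + 1) z a) =
        ∑ p ∈ antidiagonal t,
          (P x z * if z = a then 0 else firstPassage P a p.1 z) * iterK P p.2 a a := fun z => by
      split_ifs
      · simp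
      · rw [ih, mul_sum]; exact sum_congr rfl fun p _ => by ring
    calc iterK P (t + 1 + 1) x a = ∑' z, P x z * iterK P (t + 1) z a := rfl
      _ = P x a * iterK P (t + 1) a a + ∑ p ∈ antidiagonal t,
            (∑' z, P x z * if z = a then 0 else firstPassage P a p.1 z) * iterK P p.2 a a := by
        rw [hsplit, tsum_congr hterm, Summable.tsum_finsetSum fun p _ =>
          (summable_kernel_mul_ite hP0 hP1 (firstPassage_nonneg hP0 hP1 p.1)
            (firstPassage_le_one hP0 hP1 p.1) a x).mul_right _]
        simp only [tsum_mul_right]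
      _ = ∑ p ∈ antidiagonal (t + 1), firstPassage P a p.1 x * iterK P p.2 a a := by
        simp only [Nat.sum_antidiagonal_succ, firstPassage_zero hP1, firstPassage_succ hP0 hP1]

lemma summable_mul_avoidProb (hP0 : ∀ x y, 0 ≤ P x y) (hP1 : ∀ x, HasSum (P x) 1)
    (hμ0 : ∀ x, 0 ≤ μ x) (hμ : Summable μ) (n : ℕ) :
    Summable fun x => μ x * avoidProb P a n x :=
  summable_mul_of_nonneg_of_le_one hμ0 hμ (avoidProb_nonneg hP0 n) (avoidProb_le_one hP0 hP1 n)

lemma antitone_tsum_mul_avoidProb (hP0 : ∀ x y, 0 ≤ P x y) (hP1 : ∀ x, HasSum (P x) 1)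
    (hμ0 : ∀ x, 0 ≤ μ x) (hμ : Summable μ) : Antitone fun n => ∑' x, μ x * avoidProb P a n x :=
  antitone_nat_of_succ_le fun n => (summable_mul_avoidProb hP0 hP1 hμ0 hμ (n + 1)).tsum_le_tsum
    (fun x => mul_le_mul_of_nonneg_left (avoidProb_succ_le hP0 hP1 n x) (hμ0 x))
    (summable_mul_avoidProb hP0 hP1 hμ0 hμ n)

lemma invariant_eq_sum_antidiagonal (hP0 : ∀ x y, 0 ≤ P x y) (hP1 : ∀ x, HasSum (P x) 1)
    (hμ0 : ∀ x, 0 ≤ μ x) (hμ : Summable μ) (hstat : ∀ t y, ∑' x, μ x * iterK P t x y = μ y)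
    (t : ℕ) :
    μ a = ∑ p ∈ antidiagonal t, (∑' x, μ x * avoidProb P a p.1 x -
      ∑' x, μ x * avoidProb P a (p.1 + 1) x) * iterK P p.2 a a := by
  rw [← hstat (t + 1) a]
  simp_rw [iterK_succ_eq_sum_firstPassage hP0 hP1, mul_sum]
  rw [Summable.tsum_finsetSum fun p _ => summable_mul_of_nonneg_of_le_one hμ0 hμ
    (fun x => mul_nonneg (firstPassage_nonneg hP0 hP1 p.1 x) (iterK_nonneg hP0 p.2 a a))
    fun x => mul_le_one₀ (firstPassage_le_one hP0 hP1 p.1 x) (iterK_nonneg hP0 p.2 a a)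
      (iterK_le_one hP0 hP1 p.2 a a)]
  refine sum_congr rfl fun p _ => ?_
  rw [← (summable_mul_avoidProb hP0 hP1 hμ0 hμ p.1).tsum_sub
    (summable_mul_avoidProb hP0 hP1 hμ0 hμ (p.1 + 1)), ← tsum_mul_right]
  exact tsum_congr fun x => by rw [firstPassage]; ring

lemma kernel_eq_zero_of_lt_abs_sub {b₀ : ℝ} (hP0 : ∀ x y, 0 ≤ P x y) (hP1 : ∀ x, HasSum (P x) 1)
    (hskip : ∀ x, ∑' y : {y : Fin N → ℕ // |l1 y - l1 x| ≤ b₀}, P x (y : Fin N → ℕ) = 1)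
    {x y : Fin N → ℕ} (h : b₀ < |l1 y - l1 x|) : P x y = 0 := by
  set s : Set (Fin N → ℕ) := {y | |l1 y - l1 x| ≤ b₀}
  have hnear : ∑' z : s, P x z = 1 := hskip x
  have hsplit := (hP1 x).summable.tsum_subtype_add_tsum_subtype_compl s
  rw [hnear, (hP1 x).tsum_eq] at hsplit
  have hfar : P x y ≤ ∑' z : ↥sᶜ, P x z :=
    ((hP1 x).summable.subtype sᶜ).le_tsum ⟨y, h.not_ge⟩ fun z _ => hP0 x z
  exact le_antisymm (by linarith) (hP0 x y)

lemma avoidProb_eq_one_of_mul_lt_l1 {b₀ : ℝ} (hb₀ : 0 ≤ b₀) (hP0 : ∀ x y, 0 ≤ P x y)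
    (hP1 : ∀ x, HasSum (P x) 1)
    (hskip : ∀ x, ∑' y : {y : Fin N → ℕ // |l1 y - l1 x| ≤ b₀}, P x (y : Fin N → ℕ) = 1)
    (n : ℕ) (x : Fin N → ℕ) (h : n * b₀ < l1 x) : avoidProb P 0 n x = 1 := by
  induction n generalizing x with
  | zero => rfl
  | succ n ih =>
    refine (tsum_congr fun z => ?_).trans (hP1 x).tsum_eq
    by_cases hfar : b₀ < |l1 z - l1 x|
    · rw [kernel_eq_zero_of_lt_abs_sub hP0 hP1 hskip hfar, zero_mul]
    · have hz : n * b₀ < l1 z := by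
        push_cast at h
        linarith [neg_abs_le (l1 z - l1 x)]
      have hz0 : z ≠ 0 := by
        rintro rfl
        simp only [l1, Pi.zero_apply, Nat.cast_zero, sum_const_zero] at hz
        linarith [mul_nonneg n.cast_nonneg hb₀]
      rw [if_neg hz0, ih z hz, mul_one]

lemma tsum_indicator_le_tsum_mul_avoidProb {b₀ : ℝ} (hb₀ : 0 ≤ b₀) (hP0 : ∀ x y, 0 ≤ P x y)
    (hP1 : ∀ x, HasSum (P x) 1)
    (hskip : ∀ x, ∑' y : {y : Fin N → ℕ // |l1 y - l1 x| ≤ b₀}, P x (y : Fin N → ℕ) = 1)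
    (hμ0 : ∀ x, 0 ≤ μ x) (hμ : Summable μ) (n : ℕ) :
    ∑' x, {x | n * b₀ < l1 x}.indicator μ x ≤ ∑' x, μ x * avoidProb P 0 n x := by
  refine (hμ.indicator _).tsum_le_tsum (fun x => ?_) (summable_mul_avoidProb hP0 hP1 hμ0 hμ n)
  by_cases hx : x ∈ {x | n * b₀ < l1 x}
  · rw [Set.indicator_of_mem hx, avoidProb_eq_one_of_mul_lt_l1 hb₀ hP0 hP1 hskip n x hx, mul_one]
  · rw [Set.indicator_of_notMem hx]
    exact mul_nonneg (hμ0 x) (avoidProb_nonneg hP0 n x)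

end Chain

theorem invariant_measure_exponential_tail_general (N : ℕ)
    (P : (Fin N → ℕ) → (Fin N → ℕ) → ℝ)
    (hP0 : ∀ x y, 0 ≤ P x y) (hP1 : ∀ x, HasSum (P x) 1)
    (b₀ : ℝ) (hb₀ : 0 < b₀)
    (hskip : ∀ x, ∑' y : {y : Fin N → ℕ // |l1 y - l1 x| ≤ b₀}, P x (y : Fin N → ℕ) = 1)
    (hirr : ∀ x, ∃ t : ℕ, 0 < iterK P t x 0)
    (pim : (Fin N → ℕ) → ℝ) (hpim0 : ∀ x, 0 ≤ pim x) (hpim1 : HasSum pim 1)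
    (hinv : ∀ y, HasSum (fun x => pim x * P x y) (pim y))
    (θ : ℝ) (hθ : 0 < θ)
    (hgeo : ∀ x y, Tendsto (fun t : ℕ => Real.exp (θ * t) * |iterK P t x y - pim y|)
      atTop (nhds 0)) :
    ∃ θ' > (0 : ℝ), Summable (fun x : Fin N → ℕ => pim x * Real.exp (θ' * l1 x)) := by
  have hstat := tsum_mul_iterK_of_invariant hP0 hP1 hpim0 hpim1.summable hinv
  obtain ⟨C, hC⟩ := exists_abs_le_mul_exp_neg_pow (hgeo 0 0)
  obtain ⟨q, hq, K, hK⟩ := exists_mul_pow_le_of_renewal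
    (T := fun n => ∑' x, pim x * avoidProb P 0 n x)
    (invariant_pos_of_reachable hP0 hP1 hpim0 hpim1 hstat hirr)
    (by simp [avoidProb, hpim1.tsum_eq])
    (antitone_tsum_mul_avoidProb hP0 hP1 hpim0 hpim1.summable)
    (fun n => tsum_nonneg fun x => mul_nonneg (hpim0 x) (avoidProb_nonneg hP0 n x))
    (invariant_eq_sum_antidiagonal hP0 hP1 hpim0 hpim1.summable hstat) (exp_nonneg _)
    (exp_lt_one_iff.mpr (neg_neg_of_pos hθ)) hC
  exact exists_summable_mul_exp_of_tail_le hpim0 hpim1.summable hb₀ hq fun n =>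
    (mul_le_mul_of_nonneg_right (tsum_indicator_le_tsum_mul_avoidProb hb₀.le hP0 hP1 hskip
      hpim0 hpim1.summable n) (by positivity)).trans (hK n)

/-- Let `P` be a Markov transition kernel on `ℤ₊^N` which is (i) skip-free with constant
`b₀ > 0`, (ii) `0`-irreducible, and (iii) geometrically ergodic with invariant probability
measure `π`.  Then `π` has an exponential tail: `∑_x π(x) e^{θ'‖x‖} < ∞` for some `θ' > 0`. -/
theorem invariant_measure_exponential_tail (N : ℕ) (hN : 1 ≤ N)
    (P : (Fin N → ℕ) → (Fin N → ℕ) → ℝ)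
    (hP0 : ∀ x y, 0 ≤ P x y) (hP1 : ∀ x, HasSum (P x) 1)
    (b₀ : ℝ) (hb₀ : 0 < b₀)
    (hskip : ∀ x, ∑' y : {y : Fin N → ℕ // |l1 y - l1 x| ≤ b₀}, P x (y : Fin N → ℕ) = 1)
    (hirr : ∀ x, ∃ t : ℕ, 0 < iterK P t x 0)
    (pim : (Fin N → ℕ) → ℝ) (hpim0 : ∀ x, 0 ≤ pim x) (hpim1 : HasSum pim 1)
    (hinv : ∀ y, HasSum (fun x => pim x * P x y) (pim y))
    (θ : ℝ) (hθ : 0 < θ)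
    (hgeo : ∀ x y, Tendsto (fun t : ℕ => Real.exp (θ * t) * |iterK P t x y - pim y|)
      atTop (nhds 0)) :
    ∃ θ' > (0 : ℝ), Summable (fun x : Fin N → ℕ => pim x * Real.exp (θ' * l1 x)) :=
  invariant_measure_exponential_tail_general N P hP0 hP1 b₀ hb₀ hskip hirr pim hpim0 hpim1 hinv θ hθ
    hgeo
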